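/- Let G be a finite group, N ⊴ G, H ≤ G with gcd(|H|,|N|) = 1. If H satisfies the IC-Π-property in G, then HN/N satisfies the IC-Π-property in G/N. -/

import Mathlib

/-!
Both properties pass along the projection `G → G/N`. The chief factors of `G/N` are the images
of the chief factors `L/K` of `G` with `N ≤ K`, and `(G/N)/(K/N) ≅ G/K` matches the subgroups,
normalizers and orders involved, so the Π-property of any subgroup `D` passes to `DN/N`. It
remains to see that `HN/N ∩ [HN/N, G/N]` is the image of `H ∩ [H,G]`: the image of
`H ∩ [H,G]N` in `G/[H,G]` has order dividing both `|H|` and `|N|`, so `H ∩ [H,G]N ≤ [H,G]`.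
-/

/-- `H` satisfies the Π-property in `G`: for every chief factor `L/K` of `G`,
`|G/K : N_{G/K}(HK/K ∩ L/K)|` is a `π(HK/K ∩ L/K)`-number. -/
def SatisfiesPiProperty {G : Type*} [Group G] (H : Subgroup G) : Prop :=
  ∀ (K L : Subgroup G) (hK : K.Normal) (_ : L.Normal) (_ : K < L)
    (_ : ∀ M : Subgroup G, M.Normal → K ≤ M → M ≤ L → M = K ∨ M = L),
    haveI := hK
    ∀ q : ℕ, q.Prime →
      q ∣ (Subgroup.normalizer ((H.map (QuotientGroup.mk' K) ⊓ L.map (QuotientGroup.mk' K) :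
        Subgroup (G ⧸ K)) : Set (G ⧸ K))).index →
      q ∣ Nat.card ↥(H.map (QuotientGroup.mk' K) ⊓ L.map (QuotientGroup.mk' K))

/-- `H` satisfies the `IC`-Π-property in `G`: `H ∩ [H,G]` satisfies the Π-property in `G`. -/
def SatisfiesICPiProperty {G : Type*} [Group G] (H : Subgroup G) : Prop :=
  SatisfiesPiProperty (H ⊓ ⁅H, (⊤ : Subgroup G)⁆)

open scoped commutatorElement

namespace Subgroup

variable {G Q : Type*} [Group G] [Group Q]

instance commutator_top_right_normal (H : Subgroup G) : ⁅H, (⊤ : Subgroup G)⁆.Normal := by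
  refine ⟨fun n hn g => ?_⟩
  suffices hconj : (⁅H, ⊤⁆ : Subgroup G).map (MulAut.conj g).toMonoidHom ≤ ⁅H, ⊤⁆ from
    hconj ⟨n, hn, rfl⟩
  rw [map_commutator, commutator_le]
  rintro _ ⟨x, hx, rfl⟩ k -
  have hid : ⁅(MulAut.conj g).toMonoidHom x, k⁆ = ⁅x, g⁆⁻¹ * ⁅x, k * g⁆ := by
    simp only [MulEquiv.coe_toMonoidHom, MulAut.conj_apply, commutatorElement_def]
    group
  rw [hid]
  exact mul_mem (inv_mem (commutator_mem_commutator hx (mem_top g)))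
    (commutator_mem_commutator hx (mem_top _))

theorem inf_sup_le_of_coprime (H C N : Subgroup G) [C.Normal] [N.Normal]
    (hcop : (Nat.card H).Coprime (Nat.card N)) : H ⊓ (C ⊔ N) ≤ C := by
  set E := H ⊓ (C ⊔ N)
  have hEN : E.map (QuotientGroup.mk' C) ≤ N.map (QuotientGroup.mk' C) := by
    refine (map_mono inf_le_right).trans ?_
    rw [map_sup, (map_eq_bot_iff _).mpr (QuotientGroup.ker_mk' C).ge, bot_sup_eq]
  have hdvdH : Nat.card (E.map (QuotientGroup.mk' C)) ∣ Nat.card H :=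
    (card_dvd_of_surjective _ ((QuotientGroup.mk' C).subgroupMap_surjective E)).trans
      (card_dvd_of_le inf_le_left)
  have hdvdN : Nat.card (E.map (QuotientGroup.mk' C)) ∣ Nat.card N :=
    (card_dvd_of_le hEN).trans
      (card_dvd_of_surjective _ ((QuotientGroup.mk' C).subgroupMap_surjective N))
  have hbot : E.map (QuotientGroup.mk' C) = ⊥ :=
    card_eq_one.mp ((hcop.coprime_dvd_left hdvdH).eq_one_of_dvd hdvdN)
  rwa [map_eq_bot_iff, QuotientGroup.ker_mk'] at hbot

theorem map_inf_eq_of_coprime (f : G →* Q) (H C : Subgroup G) [C.Normal]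
    (hcop : (Nat.card H).Coprime (Nat.card f.ker)) :
    (H ⊓ C).map f = H.map f ⊓ C.map f := by
  refine le_antisymm (map_inf_le H C f) ?_
  rintro _ ⟨⟨a, ha, rfl⟩, hfa⟩
  have haC : a ∈ C ⊔ f.ker := by rwa [← comap_map_eq]
  exact mem_map_of_mem f ⟨ha, inf_sup_le_of_coprime H C f.ker hcop ⟨ha, haC⟩⟩

theorem map_inf_commutator_top_of_coprime {f : G →* Q} (hf : Function.Surjective f)
    (H : Subgroup G) (hcop : (Nat.card H).Coprime (Nat.card f.ker)) :
    (H ⊓ ⁅H, ⊤⁆).map f = H.map f ⊓ ⁅H.map f, ⊤⁆ := by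
  rw [map_inf_eq_of_coprime f H _ hcop, map_commutator, map_top_of_surjective f hf]

end Subgroup

def IsChiefFactor {G : Type*} [Group G] (K L : Subgroup G) : Prop :=
  K.Normal ∧ L.Normal ∧ K < L ∧ ∀ M : Subgroup G, M.Normal → K ≤ M → M ≤ L → M = K ∨ M = L

section Transport

variable {G Q : Type*} [Group G] [Group Q]

theorem IsChiefFactor.comap {f : G →* Q} (hf : Function.Surjective f) {K L : Subgroup Q}
    (h : IsChiefFactor K L) : IsChiefFactor (K.comap f) (L.comap f) := by
  obtain ⟨hK, hL, hKL, hmax⟩ := h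
  refine ⟨hK.comap f, hL.comap f, (Subgroup.comap_lt_comap_of_surjective hf).mpr hKL,
    fun M hM hKM hML => ?_⟩
  have hMeq : (M.map f).comap f = M :=
    Subgroup.comap_map_eq_self ((Subgroup.ker_le_comap f K).trans hKM)
  have hKM' : K ≤ M.map f :=
    (Subgroup.map_comap_eq_self_of_surjective hf K).ge.trans (Subgroup.map_mono hKM)
  rcases hmax _ (hM.map f hf) hKM' (Subgroup.map_le_iff_le_comap.mpr hML) with h | h
  · exact .inl (by rw [← hMeq, h])
  · exact .inr (by rw [← hMeq, h])

theorem index_normalizer_map_equiv (e : G ≃* Q) (S : Subgroup G) :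
    (Subgroup.normalizer (S.map e.toMonoidHom : Set Q)).index
      = (Subgroup.normalizer (S : Set G)).index := by
  rw [← Subgroup.map_equiv_normalizer_eq, Subgroup.index_map_of_bijective e.bijective]

theorem SatisfiesPiProperty.map {f : G →* Q} (hf : Function.Surjective f) {D : Subgroup G}
    (h : SatisfiesPiProperty D) : SatisfiesPiProperty (D.map f) := by
  intro K' L' hK' hL' hlt hchief
  obtain ⟨hK, hL, hKL, hmax⟩ := IsChiefFactor.comap hf ⟨hK', hL', hlt, hchief⟩
  intro q hq hdvd
  let e : G ⧸ K'.comap f ≃* Q ⧸ K' :=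
    QuotientGroup.liftEquiv (φ := (QuotientGroup.mk' K').comp f) _
      ((QuotientGroup.mk'_surjective K').comp hf)
      (by rw [← MonoidHom.comap_ker, QuotientGroup.ker_mk'])
  have he : ∀ S : Subgroup G, (S.map (QuotientGroup.mk' (K'.comap f))).map e.toMonoidHom
      = (S.map f).map (QuotientGroup.mk' K') := fun S => by
    rw [Subgroup.map_map, Subgroup.map_map]; rfl
  have hX : (D.map (QuotientGroup.mk' (K'.comap f)) ⊓
      (L'.comap f).map (QuotientGroup.mk' (K'.comap f))).map e.toMonoidHom
      = (D.map f).map (QuotientGroup.mk' K') ⊓ L'.map (QuotientGroup.mk' K') := by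
    rw [Subgroup.map_inf _ _ e.toMonoidHom e.injective, he, he,
      Subgroup.map_comap_eq_self_of_surjective hf]
  rw [← hX, index_normalizer_map_equiv] at hdvd
  rw [← hX, Subgroup.card_map_of_injective (f := e.toMonoidHom) e.injective]
  exact h _ _ hK hL hKL hmax q hq hdvd

end Transport

theorem icPiProperty_map_quotient_of_coprime_general {G : Type*} [Group G] (H N : Subgroup G)
    [N.Normal] (hcop : Nat.Coprime (Nat.card H) (Nat.card N))
    (h : SatisfiesICPiProperty H) :
    SatisfiesICPiProperty (H.map (QuotientGroup.mk' N)) := by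
  have hcop' : (Nat.card H).Coprime (Nat.card (QuotientGroup.mk' N).ker) := by
    rwa [QuotientGroup.ker_mk']
  unfold SatisfiesICPiProperty at h ⊢
  rw [← Subgroup.map_inf_commutator_top_of_coprime (QuotientGroup.mk'_surjective N) H hcop']
  exact h.map (QuotientGroup.mk'_surjective N)

/-- If `N ⊴ G`, `gcd(|H|,|N|) = 1` and `H` satisfies the `IC`-Π-property in `G`, then `HN/N`
satisfies the `IC`-Π-property in `G/N`. -/
theorem icPiProperty_map_quotient_of_coprime {G : Type*} [Group G] [Finite G] (H N : Subgroup G)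
    [N.Normal] (hcop : Nat.Coprime (Nat.card H) (Nat.card N))
    (h : SatisfiesICPiProperty H) :
    SatisfiesICPiProperty (H.map (QuotientGroup.mk' N)) :=
  icPiProperty_map_quotient_of_coprime_general H N hcop h
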